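/- Let n ≥ 1, let Q be a symmetric n×n real matrix with det Q ≠ 0, and let G be the (n+2)×(n+2) real matrix with entries G_{0,n+1} = G_{n+1,0} = 1, G_{a,a} = 1 for 1 ≤ a ≤ n, and all other entries zero. Define the quadrilinear form R_Q on ℝ^{n+2} by R_Q(x,y,z,w) = Σ_{a,b=1}^{n} (x_a y_{n+1} − x_{n+1} y_a) Q_{ab} (z_b w_{n+1} − z_{n+1} w_b). Suppose M is an (n+2)×(n+2) real matrix satisfying Mᵀ·G·M = G, R_Q(Mx, My, Mz, Mw) = R_Q(x, y, z, w) for all x, y, z, w ∈ ℝ^{n+2}, and M·e_0 = λ·e_0 for some real λ. Then λ = 1 or λ = −1. -/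

import Mathlib

open Matrix

/-- The Gram matrix of the Lorentzian metric of a Cahen–Wallach space in the
quasi-orthonormal basis `e_- = e_0, e_1, …, e_n, e_+ = e_{n+1}`:
`G_{0,n+1} = G_{n+1,0} = 1`, `G_{a,a} = 1` for `1 ≤ a ≤ n`, all other entries zero. -/
def cwGram (n : ℕ) : Matrix (Fin (n + 2)) (Fin (n + 2)) ℝ :=
  Matrix.of fun i j =>
    if (i = 0 ∧ j = Fin.last (n + 1)) ∨ (i = Fin.last (n + 1) ∧ j = 0) then 1
    else if i = j ∧ 1 ≤ (i : ℕ) ∧ (i : ℕ) ≤ n then 1 else 0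

/-- The curvature tensor of a Cahen–Wallach space at a point, as a quadrilinear form on
`ℝ^(n+2)`:
`R_Q(x,y,z,w) = ∑_{a,b=1}^{n} (x_a y_{n+1} − x_{n+1} y_a) Q_{ab} (z_b w_{n+1} − z_{n+1} w_b)`. -/
def cahenWallachR (n : ℕ) (Q : Matrix (Fin n) (Fin n) ℝ)
    (x y z w : Fin (n + 2) → ℝ) : ℝ :=
  ∑ a : Fin n, ∑ b : Fin n,
    (x a.succ.castSucc * y (Fin.last (n + 1)) - x (Fin.last (n + 1)) * y a.succ.castSucc)
      * Q a b *
    (z b.succ.castSucc * w (Fin.last (n + 1)) - z (Fin.last (n + 1)) * w b.succ.castSucc)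

/-!
`G` is the permutation matrix of the transposition `(0 n+1)`, so
`g(x, y) = x₀ y₊ + x₊ y₀ + ⟨x⊥, y⊥⟩`, where `x⊥ = (x₁, …, xₙ)`. Pairing `M e₀ = λ e₀` with
`M e₊` and `M eₐ` gives `λ M₊₊ = 1` and `M₊ₐ = 0`, so the transverse block `A` of `M` is
orthogonal. Invariance of `R_Q` on `(eₐ, e₊, e_b, e₊)` then reads `M₊₊² AᵀQA = Q`, that is
`AᵀQA = λ² Q`, and taking determinants gives `λ^(2n) = 1`.
-/

theorem Matrix.transpose_mul_mul_apply {m n R : Type*} [Fintype m] [NonUnitalSemiring R]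
    (A : Matrix m n R) (B : Matrix m m R) (i j : n) :
    (Aᵀ * B * A) i j = A.col i ⬝ᵥ B *ᵥ A.col j := by
  rw [mul_apply', dotProduct_mulVec]
  rfl

theorem Matrix.pow_card_eq_one_of_transpose_mul_mul_eq_smul {ι R : Type*} [Fintype ι]
    [DecidableEq ι] [CommRing R] [IsDomain R] {A Q : Matrix ι ι R} {c : R}
    (hA : Aᵀ * A = 1) (hQ : Aᵀ * Q * A = c • Q) (hQdet : Q.det ≠ 0) :
    c ^ Fintype.card ι = 1 := by
  have hdetA : A.det * A.det = 1 := by simpa using congrArg det hA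
  have hdetQ := congrArg det hQ
  rw [det_mul, det_mul, det_transpose, det_smul] at hdetQ
  refine mul_right_cancel₀ hQdet ?_
  linear_combination Q.det * hdetA - hdetQ

theorem Fin.sum_univ_add_two_eq {M : Type*} [AddCommMonoid M] {n : ℕ} (f : Fin (n + 2) → M) :
    ∑ i, f i = f 0 + ∑ a : Fin n, f a.succ.castSucc + f (Fin.last (n + 1)) := by
  rw [Fin.sum_univ_succ, Fin.sum_univ_castSucc]
  simp only [Fin.succ_castSucc, Fin.succ_last, add_assoc]

namespace CahenWallach

variable {n : ℕ}

theorem succ_castSucc_ne_zero (a : Fin n) : (a.succ.castSucc : Fin (n + 2)) ≠ 0 := by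
  simp [Fin.ext_iff]

theorem succ_castSucc_ne_last (a : Fin n) :
    (a.succ.castSucc : Fin (n + 2)) ≠ Fin.last (n + 1) := by
  simp [Fin.ext_iff, a.isLt.ne]

def transverse {α : Type*} (x : Fin (n + 2) → α) : Fin n → α := fun a => x a.succ.castSucc

def transverseBlock {α : Type*} (M : Matrix (Fin (n + 2)) (Fin (n + 2)) α) :
    Matrix (Fin n) (Fin n) α :=
  M.submatrix (fun a => a.succ.castSucc) (fun a => a.succ.castSucc)

theorem transverse_single_zero {α : Type*} [Zero α] (c : α) :
    transverse (Pi.single (0 : Fin (n + 2)) c) = 0 := by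
  ext a
  simp [transverse]

theorem transverse_single_succ_castSucc {α : Type*} [Zero α] (a : Fin n) (c : α) :
    transverse (Pi.single (a.succ.castSucc : Fin (n + 2)) c) = Pi.single a c := by
  ext b
  simp [transverse, Pi.single_apply]

theorem swap_zero_last_succ_castSucc (a : Fin n) :
    Equiv.swap 0 (Fin.last (n + 1)) a.succ.castSucc = a.succ.castSucc :=
  Equiv.swap_apply_of_ne_of_ne (succ_castSucc_ne_zero a) (succ_castSucc_ne_last a)

theorem cwGram_eq_permMatrix : cwGram n = (Equiv.swap 0 (Fin.last (n + 1))).permMatrix ℝ := by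
  ext i j
  simp only [cwGram, of_apply, PEquiv.toMatrix_apply, Equiv.toPEquiv_apply, Option.mem_def,
    Option.some.injEq, Equiv.swap_apply_def]
  grind [Fin.ext_iff]

theorem cwGram_zero_last : cwGram n 0 (Fin.last (n + 1)) = 1 := by
  simp [cwGram_eq_permMatrix]

theorem cwGram_zero_succ_castSucc (a : Fin n) : cwGram n 0 a.succ.castSucc = 0 := by
  simp [cwGram_eq_permMatrix, Fin.ext_iff, a.isLt.ne']

theorem cwGram_succ_castSucc (a b : Fin n) :
    cwGram n a.succ.castSucc b.succ.castSucc = (1 : Matrix (Fin n) (Fin n) ℝ) a b := by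
  simp only [cwGram_eq_permMatrix, PEquiv.toMatrix_apply, Equiv.toPEquiv_apply,
    swap_zero_last_succ_castSucc]
  simp [one_apply]

theorem dotProduct_cwGram_mulVec (x y : Fin (n + 2) → ℝ) :
    x ⬝ᵥ cwGram n *ᵥ y
      = x 0 * y (Fin.last (n + 1)) + x (Fin.last (n + 1)) * y 0
        + transverse x ⬝ᵥ transverse y := by
  rw [cwGram_eq_permMatrix, permMatrix_mulVec, dotProduct, Fin.sum_univ_add_two_eq]
  simp only [Function.comp_apply, Equiv.swap_apply_left, Equiv.swap_apply_right,
    swap_zero_last_succ_castSucc, transverse, dotProduct]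
  ring

theorem cahenWallachR_eq_sq_mul_of_last_eq_zero (Q : Matrix (Fin n) (Fin n) ℝ)
    {x z : Fin (n + 2) → ℝ} (hx : x (Fin.last (n + 1)) = 0) (hz : z (Fin.last (n + 1)) = 0)
    (v : Fin (n + 2) → ℝ) :
    cahenWallachR n Q x v z v
      = v (Fin.last (n + 1)) ^ 2 * (transverse x ⬝ᵥ Q *ᵥ transverse z) := by
  simp only [cahenWallachR, hx, hz, zero_mul, sub_zero, dotProduct, mulVec, Finset.mul_sum,
    transverse]
  exact Finset.sum_congr rfl fun a _ => Finset.sum_congr rfl fun b _ => by ring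

section Isometry

variable {M : Matrix (Fin (n + 2)) (Fin (n + 2)) ℝ} (hMG : Mᵀ * cwGram n * M = cwGram n)
  {lam : ℝ} (hM0 : M.col 0 = Pi.single 0 lam)
include hMG

theorem cwGram_apply_eq_of_isometry (i j : Fin (n + 2)) :
    cwGram n i j = M.col i ⬝ᵥ cwGram n *ᵥ M.col j := by
  rw [← transpose_mul_mul_apply, hMG]

include hM0

theorem mul_apply_last_last_eq_one : lam * M (Fin.last (n + 1)) (Fin.last (n + 1)) = 1 := by
  have h := cwGram_apply_eq_of_isometry hMG 0 (Fin.last (n + 1))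
  rw [cwGram_zero_last, hM0, dotProduct_cwGram_mulVec] at h
  simpa [transverse_single_zero] using h.symm

theorem apply_last_succ_castSucc_eq_zero (a : Fin n) :
    M (Fin.last (n + 1)) a.succ.castSucc = 0 := by
  have h := cwGram_apply_eq_of_isometry hMG 0 a.succ.castSucc
  rw [cwGram_zero_succ_castSucc, hM0, dotProduct_cwGram_mulVec] at h
  have hlam : lam ≠ 0 := left_ne_zero_of_mul_eq_one (mul_apply_last_last_eq_one hMG hM0)
  simpa [transverse_single_zero, hlam] using h.symm

theorem transpose_transverseBlock_mul_self : (transverseBlock M)ᵀ * transverseBlock M = 1 := by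
  ext a b
  have h := cwGram_apply_eq_of_isometry hMG a.succ.castSucc b.succ.castSucc
  rw [cwGram_succ_castSucc, dotProduct_cwGram_mulVec] at h
  simp only [col_apply, apply_last_succ_castSucc_eq_zero hMG hM0, mul_zero, zero_mul,
    add_zero, zero_add] at h
  rw [h, mul_apply']
  rfl

end Isometry

theorem sq_smul_transpose_transverseBlock_mul_mul {Q : Matrix (Fin n) (Fin n) ℝ}
    {M : Matrix (Fin (n + 2)) (Fin (n + 2)) ℝ}
    (hMR : ∀ x y z w : Fin (n + 2) → ℝ,
      cahenWallachR n Q (M *ᵥ x) (M *ᵥ y) (M *ᵥ z) (M *ᵥ w) = cahenWallachR n Q x y z w)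
    (hlast : ∀ a : Fin n, M (Fin.last (n + 1)) a.succ.castSucc = 0) :
    M (Fin.last (n + 1)) (Fin.last (n + 1)) ^ 2 • ((transverseBlock M)ᵀ * Q * transverseBlock M)
      = Q := by
  ext a b
  have h := hMR (Pi.single a.succ.castSucc 1) (Pi.single (Fin.last (n + 1)) 1)
    (Pi.single b.succ.castSucc 1) (Pi.single (Fin.last (n + 1)) 1)
  have hsingle (c : Fin n) : (Pi.single c.succ.castSucc 1 : Fin (n + 2) → ℝ) (Fin.last (n + 1))
      = 0 := Pi.single_eq_of_ne (succ_castSucc_ne_last c).symm 1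
  simp only [mulVec_single_one] at h
  rw [cahenWallachR_eq_sq_mul_of_last_eq_zero Q (hlast a) (hlast b),
    cahenWallachR_eq_sq_mul_of_last_eq_zero Q (hsingle a) (hsingle b),
    transverse_single_succ_castSucc, transverse_single_succ_castSucc, Pi.single_eq_same,
    single_one_dotProduct, mulVec_single_one] at h
  simp only [col_apply, one_pow, one_mul] at h
  rwa [Matrix.smul_apply, transpose_mul_mul_apply, smul_eq_mul]

end CahenWallach

open CahenWallach

theorem stmt_6_general (n : ℕ) (hn : 1 ≤ n) (Q : Matrix (Fin n) (Fin n) ℝ)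
    (hQdet : Q.det ≠ 0)
    (M : Matrix (Fin (n + 2)) (Fin (n + 2)) ℝ)
    (hMG : Mᵀ * cwGram n * M = cwGram n)
    (hMR : ∀ x y z w : Fin (n + 2) → ℝ,
      cahenWallachR n Q (M.mulVec x) (M.mulVec y) (M.mulVec z) (M.mulVec w)
        = cahenWallachR n Q x y z w)
    (lam : ℝ)
    (hM0 : M.mulVec (Pi.single (0 : Fin (n + 2)) 1)
        = lam • (Pi.single (0 : Fin (n + 2)) 1 : Fin (n + 2) → ℝ)) :
    lam = 1 ∨ lam = -1 := by
  have hcol0 : M.col 0 = Pi.single 0 lam := by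
    rw [← mulVec_single_one, hM0, ← Pi.single_smul, smul_eq_mul, mul_one]
  have hQA : (transverseBlock M)ᵀ * Q * transverseBlock M = lam ^ 2 • Q := by
    conv_rhs => rw [← sq_smul_transpose_transverseBlock_mul_mul hMR
      (apply_last_succ_castSucc_eq_zero hMG hcol0)]
    rw [smul_smul, ← mul_pow, mul_apply_last_last_eq_one hMG hcol0, one_pow, one_smul]
  have hpow : (lam ^ 2) ^ n = 1 := by
    simpa using pow_card_eq_one_of_transpose_mul_mul_eq_smul
      (transpose_transverseBlock_mul_self hMG hcol0) hQA hQdet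
  rw [← sq_eq_one_iff]
  exact (pow_eq_one_iff_of_nonneg (sq_nonneg lam) (by omega)).mp hpow

/-- If `M` preserves the Cahen–Wallach metric (`Mᵀ G M = G`) and curvature tensor `R_Q`
(with `Q` symmetric and invertible), and `M e_0 = lam • e_0`, then `lam = 1` or `lam = -1`. -/
theorem stmt_6 (n : ℕ) (hn : 1 ≤ n) (Q : Matrix (Fin n) (Fin n) ℝ)
    (hQsymm : Q.IsSymm) (hQdet : Q.det ≠ 0)
    (M : Matrix (Fin (n + 2)) (Fin (n + 2)) ℝ)
    (hMG : Mᵀ * cwGram n * M = cwGram n)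
    (hMR : ∀ x y z w : Fin (n + 2) → ℝ,
      cahenWallachR n Q (M.mulVec x) (M.mulVec y) (M.mulVec z) (M.mulVec w)
        = cahenWallachR n Q x y z w)
    (lam : ℝ)
    (hM0 : M.mulVec (Pi.single (0 : Fin (n + 2)) 1)
        = lam • (Pi.single (0 : Fin (n + 2)) 1 : Fin (n + 2) → ℝ)) :
    lam = 1 ∨ lam = -1 :=
  stmt_6_general n hn Q hQdet M hMG hMR lam hM0
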